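/- arXiv:0910.3503 — 3 statements merged into one kernel-verified Lean document; each statement's English description precedes it below -/
import Mathlib

section
/- Let x be a bitstream of length n, let L ≥ 1, and let t be an integer. Suppose the substring of length L starting at position a (with a + L − 1 ≤ n) contains m = rank(a + L − 1) − rank(a − 1) ones, and let ε = |m − t| with ε > 0. Then for every position a' with a ≤ a' < a + ε and a' + L − 1 ≤ n, the substring of length L starting at a' does not contain exactly t ones. (In particular, for a ≤ a', the number of ones in the length-L window starting at a' differs from that starting at a by at most a' − a.) -/
/-- If the length-`L` window starting at `a` contains `m` ones with
`ε = |m - t| > 0`, then no length-`L` window starting at `a'` with `a ≤ a' < a + ε`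
contains exactly `t` ones; indeed the number of ones in the window starting at `a'`
differs from `m` by at most `a' - a`. -/
theorem skip_mismatch_window
    (n : ℕ) (x : ℕ → ℕ) (hx : ∀ i, 1 ≤ i → i ≤ n → x i = 0 ∨ x i = 1)
    (rank : ℕ → ℕ) (hrank : ∀ k, rank k = ∑ i ∈ Finset.Icc 1 k, x i)
    (L : ℕ) (hL : 1 ≤ L) (t : ℤ)
    (a : ℕ) (ha : 1 ≤ a) (han : a + L - 1 ≤ n)
    (m : ℤ) (hm : m = (rank (a + L - 1) : ℤ) - (rank (a - 1) : ℤ))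
    (ε : ℕ) (hε : (ε : ℤ) = |m - t|) (hεpos : 0 < ε) :
    (∀ a' : ℕ, a ≤ a' → a' < a + ε → a' + L - 1 ≤ n →
        (rank (a' + L - 1) : ℤ) - (rank (a' - 1) : ℤ) ≠ t) ∧
    (∀ a' : ℕ, a ≤ a' → a' + L - 1 ≤ n →
        |((rank (a' + L - 1) : ℤ) - (rank (a' - 1) : ℤ)) - m| ≤ (a' : ℤ) - (a : ℤ)) := by
  -- rank is monotone
  have hmono : ∀ c b : ℕ, c ≤ b → rank c ≤ rank b := by
    intro c b hcb
    rw [hrank, hrank]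
    exact Finset.sum_le_sum_of_subset (Finset.Icc_subset_Icc_right hcb)
  -- rank grows by at most the number of steps (within range)
  have hstep : ∀ c b : ℕ, c ≤ b → b ≤ n → rank b ≤ rank c + (b - c) := by
    intro c b hcb hbn
    rw [hrank, hrank]
    have hsplit : Finset.Icc 1 b = Finset.Icc 1 c ∪ Finset.Icc (c + 1) b := by
      ext i; simp only [Finset.mem_Icc, Finset.mem_union]; omega
    rw [hsplit, Finset.sum_union (by
      apply Finset.disjoint_left.mpr
      intro i hi hi'
      simp only [Finset.mem_Icc] at hi hi'
      omega)]
    have : ∑ i ∈ Finset.Icc (c + 1) b, x i ≤ ∑ i ∈ Finset.Icc (c + 1) b, 1 := by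
      apply Finset.sum_le_sum
      intro i hi
      simp only [Finset.mem_Icc] at hi
      rcases hx i (by omega) (by omega) with h | h <;> omega
    simp only [Finset.sum_const, smul_eq_mul, mul_one] at this
    have hcard : (Finset.Icc (c + 1) b).card = b - c := by
      rw [Nat.card_Icc]; omega
    omega
  have key : ∀ a' : ℕ, a ≤ a' → a' + L - 1 ≤ n →
      |((rank (a' + L - 1) : ℤ) - (rank (a' - 1) : ℤ)) - m| ≤ (a' : ℤ) - (a : ℤ) := by
    intro a' haa' ha'n
    have h1 : rank (a + L - 1) ≤ rank (a' + L - 1) := hmono _ _ (by omega)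
    have h2 : rank (a - 1) ≤ rank (a' - 1) := hmono _ _ (by omega)
    have h3 : rank (a' + L - 1) ≤ rank (a + L - 1) + ((a' + L - 1) - (a + L - 1)) :=
      hstep _ _ (by omega) ha'n
    have h4 : rank (a' - 1) ≤ rank (a - 1) + ((a' - 1) - (a - 1)) :=
      hstep _ _ (by omega) (by omega)
    rw [abs_le]
    constructor <;> [skip; skip] <;>
      · subst hm
        push_cast
        omega
  refine ⟨?_, key⟩
  intro a' haa' ha'ε ha'n heq
  have := key a' haa' ha'n
  rw [heq] at this
  have habs : |t - m| = |m - t| := abs_sub_comm t m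
  rw [habs, ← hε] at this
  omega
end

section
/- Let x be a bitstream of length n, let α, β be coprime integers with 0 < α < β ≤ n, and let d be the associated distance sequence. Then the maximum of b − a over all pairs 0 ≤ a ≤ b ≤ n with d_a ≤ d_b equals the maximum of b − a over all pairs 0 ≤ a ≤ b ≤ n with d_a ≤ d_b such that a is a minimal position and b is a maximal position. (Consequently, to solve the bounded density problem it suffices to consider only minimal start positions paired with maximal end positions.) -/
lemma exists_minimal_pos (d : ℕ → ℤ) :
    ∀ a : ℕ, ∃ a', a' ≤ a ∧ d a' ≤ d a ∧ ∀ i < a', ¬ d i ≤ d a' := by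
  intro a
  induction a using Nat.strong_induction_on with
  | _ a ih =>
    by_cases h : ∀ i < a, ¬ d i ≤ d a
    · exact ⟨a, le_rfl, le_rfl, h⟩
    · push_neg at h
      obtain ⟨i, hi, hdi⟩ := h
      obtain ⟨a', h1, h2, h3⟩ := ih i hi
      exact ⟨a', h1.trans hi.le, h2.trans hdi, h3⟩

lemma exists_maximal_pos (d : ℕ → ℤ) (n : ℕ) :
    ∀ k b : ℕ, n - b ≤ k → b ≤ n →
      ∃ b', b ≤ b' ∧ b' ≤ n ∧ d b ≤ d b' ∧ ∀ i, b' < i → i ≤ n → ¬ d b' ≤ d i := by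
  intro k
  induction k with
  | zero =>
    intro b hk hbn
    have : b = n := le_antisymm hbn (by omega)
    subst this
    exact ⟨b, le_rfl, le_rfl, le_rfl, fun i hi hin => absurd hin (by omega)⟩
  | succ k ih =>
    intro b hk hbn
    by_cases h : ∀ i, b < i → i ≤ n → ¬ d b ≤ d i
    · exact ⟨b, le_rfl, hbn, le_rfl, h⟩
    · push_neg at h
      obtain ⟨i, hbi, hin, hdi⟩ := h
      obtain ⟨b', h1, h2, h3, h4⟩ := ih i (by omega) hin
      exact ⟨b', hbi.le.trans h1, h2, hdi.trans h3, h4⟩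

/-- The maximum of `b - a` over all pairs `a ≤ b ≤ n` with `d a ≤ d b`
equals the maximum of `b - a` over such pairs in which moreover `a` is a minimal
position and `b` is a maximal position. -/
theorem bounded_density_extremal_pairs_suffice
    (n : ℕ) (x : ℕ → ℕ) (hx : ∀ i, 1 ≤ i → i ≤ n → x i = 0 ∨ x i = 1)
    (α β : ℕ) (hco : Nat.Coprime α β) (hα : 0 < α) (hαβ : α < β) (hβn : β ≤ n)
    (rank : ℕ → ℕ) (hrank : ∀ k, rank k = ∑ i ∈ Finset.Icc 1 k, x i)
    (d : ℕ → ℤ) (hd : ∀ i, d i = (β : ℤ) * (rank i : ℤ) - (α : ℤ) * (i : ℤ)) :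
    sSup {m : ℕ | ∃ a b : ℕ, a ≤ b ∧ b ≤ n ∧ d a ≤ d b ∧ m = b - a}
      = sSup {m : ℕ | ∃ a b : ℕ, a ≤ b ∧ b ≤ n ∧ d a ≤ d b ∧
          (∀ i : ℕ, i < a → ¬ d i ≤ d a) ∧
          (∀ i : ℕ, b < i → i ≤ n → ¬ d b ≤ d i) ∧ m = b - a} := by
  set S1 := {m : ℕ | ∃ a b : ℕ, a ≤ b ∧ b ≤ n ∧ d a ≤ d b ∧ m = b - a}
  set S2 := {m : ℕ | ∃ a b : ℕ, a ≤ b ∧ b ≤ n ∧ d a ≤ d b ∧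
          (∀ i : ℕ, i < a → ¬ d i ≤ d a) ∧
          (∀ i : ℕ, b < i → i ≤ n → ¬ d b ≤ d i) ∧ m = b - a}
  have hbdd2 : BddAbove S2 := by
    refine ⟨n, fun m hm => ?_⟩
    obtain ⟨a, b, hab, hbn, _, _, _, hm⟩ := hm
    omega
  apply le_antisymm
  · apply csSup_le
    · exact ⟨0, 0, 0, le_rfl, Nat.zero_le n, le_rfl, rfl⟩
    · rintro m ⟨a, b, hab, hbn, hdab, hm⟩
      obtain ⟨a', ha1, ha2, ha3⟩ := exists_minimal_pos d a
      obtain ⟨b', hb1, hb2, hb3, hb4⟩ := exists_maximal_pos d n (n - b) b le_rfl hbn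
      have : b' - a' ∈ S2 :=
        ⟨a', b', le_trans (ha1.trans hab) hb1, hb2, le_trans (ha2.trans hdab) hb3,
          ha3, hb4, rfl⟩
      calc m = b - a := hm
        _ ≤ b' - a' := by omega
        _ ≤ sSup S2 := le_csSup hbdd2 this
  · apply csSup_le_csSup
    · refine ⟨n, fun m hm => ?_⟩
      obtain ⟨a, b, hab, hbn, _, hm⟩ := hm
      omega
    · obtain ⟨b', hb1, hb2, hb3, hb4⟩ :=
        exists_maximal_pos d n n 0 (by omega) (Nat.zero_le n)
      exact ⟨b', 0, b', hb1, hb2, hb3, fun i h => absurd h (by omega), hb4, rfl⟩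
    · rintro m ⟨a, b, hab, hbn, hdab, _, _, hm⟩
      exact ⟨a, b, hab, hbn, hdab, hm⟩
end

section
/- Let x be a bitstream of length n, let α, β be coprime integers with 0 < α < β ≤ n, and let d be the associated distance sequence. Then x has a (nonempty) substring of density exactly α/β if and only if there exist indices 0 ≤ i < j ≤ n with d_i = d_j; and in that case the length of the longest substring of density exactly α/β equals the maximum of j − i over all pairs 0 ≤ i < j ≤ n with d_i = d_j. -/
/-- `x` has a substring of density exactly `α/β` iff there are indices
`i < j ≤ n` with `d i = d j`; and in that case the length of the longest such
substring equals the maximum of `j - i` over all pairs with `d i = d j`. -/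
theorem fixed_density_via_distances
    (n : ℕ) (x : ℕ → ℕ) (hx : ∀ i, 1 ≤ i → i ≤ n → x i = 0 ∨ x i = 1)
    (α β : ℕ) (hco : Nat.Coprime α β) (hα : 0 < α) (hαβ : α < β) (hβn : β ≤ n)
    (rank : ℕ → ℕ) (hrank : ∀ k, rank k = ∑ i ∈ Finset.Icc 1 k, x i)
    (d : ℕ → ℤ) (hd : ∀ i, d i = (β : ℤ) * (rank i : ℤ) - (α : ℤ) * (i : ℤ)) :
    ((∃ a b : ℕ, 1 ≤ a ∧ a ≤ b ∧ b ≤ n ∧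
        (β : ℤ) * ((rank b : ℤ) - (rank (a - 1) : ℤ)) = (α : ℤ) * ((b : ℤ) - (a : ℤ) + 1))
      ↔ (∃ i j : ℕ, i < j ∧ j ≤ n ∧ d i = d j)) ∧
    ((∃ i j : ℕ, i < j ∧ j ≤ n ∧ d i = d j) →
      sSup {L : ℕ | ∃ a b : ℕ, 1 ≤ a ∧ a ≤ b ∧ b ≤ n ∧
          (β : ℤ) * ((rank b : ℤ) - (rank (a - 1) : ℤ)) = (α : ℤ) * ((b : ℤ) - (a : ℤ) + 1) ∧
          L = b - a + 1}
        = sSup {m : ℕ | ∃ i j : ℕ, i < j ∧ j ≤ n ∧ d i = d j ∧ m = j - i}) := by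
  have key : ∀ a b : ℕ, 1 ≤ a → a ≤ b →
      ((β : ℤ) * ((rank b : ℤ) - (rank (a - 1) : ℤ)) = (α : ℤ) * ((b : ℤ) - (a : ℤ) + 1)
       ↔ d (a - 1) = d b) := by
    intro a b ha hab
    rw [hd, hd]
    have hc : ((a - 1 : ℕ) : ℤ) = (a : ℤ) - 1 := by omega
    rw [hc]
    constructor <;> intro h <;> linarith
  have hset : {L : ℕ | ∃ a b : ℕ, 1 ≤ a ∧ a ≤ b ∧ b ≤ n ∧
          (β : ℤ) * ((rank b : ℤ) - (rank (a - 1) : ℤ)) = (α : ℤ) * ((b : ℤ) - (a : ℤ) + 1) ∧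
          L = b - a + 1}
        = {m : ℕ | ∃ i j : ℕ, i < j ∧ j ≤ n ∧ d i = d j ∧ m = j - i} := by
    ext L
    simp only [Set.mem_setOf_eq]
    constructor
    · rintro ⟨a, b, ha, hab, hbn, heq, hL⟩
      exact ⟨a - 1, b, by omega, hbn, (key a b ha hab).mp heq, by omega⟩
    · rintro ⟨i, j, hij, hjn, hdij, hm⟩
      refine ⟨i + 1, j, by omega, by omega, hjn, ?_, by omega⟩
      exact (key (i + 1) j (by omega) (by omega)).mpr (by simpa using hdij)
  constructor
  · constructor
    · rintro ⟨a, b, ha, hab, hbn, heq⟩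
      exact ⟨a - 1, b, by omega, hbn, (key a b ha hab).mp heq⟩
    · rintro ⟨i, j, hij, hjn, hdij⟩
      exact ⟨i + 1, j, by omega, by omega, hjn,
        (key (i + 1) j (by omega) (by omega)).mpr (by simpa using hdij)⟩
  · intro _
    rw [hset]
end
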